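/- (Hochster.) Fix positive integers r_1, r_2 and an integer f_0 ≥ r_1, and consider the length-2 format (f_0, r_1 + r_2, r_2). Then there exists a universal pair (R_univ, F^univ) for this format over ℂ: a commutative ℂ-algebra R_univ together with an acyclic complex F^univ : 0 → R_univ^{r_2} → R_univ^{r_1 + r_2} → R_univ^{f_0} such that for every commutative ℂ-algebra S and every acyclic complex G of finite free S-modules of the same format, there exists a unique ℂ-algebra homomorphism R_univ → S specializing F^univ to G. -/

import Mathlib

/-!
STATEMENT 15 (Hochster): For the length-2 format (f₀, r₁ + r₂, r₂) (with r₁, r₂ ≥ 1,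
f₀ ≥ r₁) there exists a universal pair over ℂ.
-/

/-- A complex `0 → R^{f n} → ⋯ → R^{f 1} → R^{f 0}` of finite free `R`-modules, encoded by
its matrices of differentials; `d k` is the matrix of the differential `F_{k+1} → F_k`.
(A format of length `n` is encoded by a function `f : ℕ → ℕ` vanishing above `n`.) -/
structure MatrixComplex (R : Type) [CommRing R] (f : ℕ → ℕ) where
  d : ∀ k : ℕ, Matrix (Fin (f k)) (Fin (f (k + 1))) R
  comp_eq_zero : ∀ k : ℕ, d k * d (k + 1) = 0

/-- Acyclicity: exactness at `F_k` for all `k = 1, …, n`. -/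
def MatrixComplex.IsAcyclic {R : Type} [CommRing R] {f : ℕ → ℕ} (n : ℕ)
    (C : MatrixComplex R f) : Prop :=
  ∀ k : ℕ, k < n →
    LinearMap.ker (C.d k).mulVecLin = LinearMap.range (C.d (k + 1)).mulVecLin

/-- A ring homomorphism `φ : R → S` specializes `C` to `C'` if applying `φ` entrywise to the
differentials of `C` yields the differentials of `C'`. -/
def SpecializesCx {R S : Type} [CommRing R] [CommRing S] {f : ℕ → ℕ}
    (φ : R →+* S) (C : MatrixComplex R f) (C' : MatrixComplex S f) : Prop :=
  ∀ k : ℕ, (C.d k).map φ = C'.d k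

/-- A commutative ℂ-algebra equipped with a complex of finite free modules of format `f`. -/
structure AlgebraComplexPair (f : ℕ → ℕ) : Type 1 where
  carrier : Type
  [commRing : CommRing carrier]
  [algebra : Algebra ℂ carrier]
  complex : MatrixComplex carrier f

attribute [instance] AlgebraComplexPair.commRing AlgebraComplexPair.algebra

/-- The format `(f₀, r₁ + r₂, r₂)` of length 2. -/
def hochsterFormat (f₀ r₁ r₂ : ℕ) : ℕ → ℕ :=
  fun k => if k = 0 then f₀ else if k = 1 then r₁ + r₂ else if k = 2 then r₂ else 0

/-
For a format of length two the last differential `d₁` is injective, so a cycle has at most one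
lift along `d₁`. Consequently resolutions of such a format are stable under products, under
restriction to subalgebras that contain the solutions `w` of `d₁ w = v` for all `v` they contain,
and in particular under restriction to the equalizer of two specializations to the same resolution.
Every resolution over `S` restricts to such a subalgebra of cardinality at most `#ℂ`, hence
specializes from one over a quotient of a fixed polynomial ring; the product `W` of all of those is
weakly universal (a solution set in the sense of Freyd). The universal pair is the restriction of
`W`'s complex to the subalgebra fixed by every self-specialization of `W`: two specializations out
of it agree, because their equalizer again carries a resolution, hence receives a specialization
from `W`, and the composite of `W` to the equalizer and back into `W` fixes the whole subalgebra.
-/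

open Matrix Cardinal

variable {K R S : Type} [CommRing K] [CommRing R] [CommRing S] {f : ℕ → ℕ}

theorem SpecializesCx.comp {T : Type} [CommRing T] {φ : R →+* S} {ψ : S →+* T}
    {C : MatrixComplex R f} {C' : MatrixComplex S f} {C'' : MatrixComplex T f}
    (hφ : SpecializesCx φ C C') (hψ : SpecializesCx ψ C' C'') :
    SpecializesCx (ψ.comp φ) C C'' := fun k => by
  rw [← hψ k, ← hφ k, Matrix.map_map]
  rfl

theorem SpecializesCx.mulVec_comp {φ : R →+* S} {C : MatrixComplex R f}
    {C' : MatrixComplex S f} (h : SpecializesCx φ C C') (k : ℕ) (u : Fin (f (k + 1)) → R) :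
    C'.d k *ᵥ (φ ∘ u) = φ ∘ (C.d k *ᵥ u) := by
  rw [← h k]
  funext i
  exact (RingHom.map_mulVec φ _ u i).symm

theorem specializesCx_id (C : MatrixComplex R f) : SpecializesCx (RingHom.id R) C C :=
  fun k => Matrix.map_id (C.d k)

theorem SpecializesCx.comp_eq_comp_of_mulVec {φ ψ : R →+* S} {C : MatrixComplex R f}
    {G : MatrixComplex S f} (hφ : SpecializesCx φ C G) (hψ : SpecializesCx ψ C G)
    (hG : Function.Injective (G.d 1).mulVec) {w : Fin (f 2) → R}
    (hw : φ ∘ (C.d 1 *ᵥ w) = ψ ∘ (C.d 1 *ᵥ w)) : φ ∘ w = ψ ∘ w :=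
  hG (by rw [hφ.mulVec_comp, hψ.mulVec_comp, hw])

namespace MatrixComplex

def map (C : MatrixComplex R f) (φ : R →+* S) : MatrixComplex S f where
  d k := (C.d k).map φ
  comp_eq_zero k := by rw [← Matrix.map_mul, C.comp_eq_zero k, Matrix.map_zero _ (map_zero φ)]

theorem specializesCx_map_symm (C : MatrixComplex R f) (e : R ≃+* S) :
    SpecializesCx e.symm.toRingHom (C.map e.toRingHom) C := fun k => by
  ext i j
  simp [MatrixComplex.map]

def restrict [Algebra K R] (C : MatrixComplex R f) (A : Subalgebra K R)
    (hA : ∀ k i j, C.d k i j ∈ A) : MatrixComplex A f where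
  d k := Matrix.of fun i j => ⟨C.d k i j, hA k i j⟩
  comp_eq_zero k := by
    ext i j
    simpa [Matrix.mul_apply] using congrFun (congrFun (C.comp_eq_zero k) i) j

theorem specializesCx_restrict [Algebra K R] (C : MatrixComplex R f) (A : Subalgebra K R)
    (hA : ∀ k i j, C.d k i j ∈ A) : SpecializesCx (A.val : A →+* R) (C.restrict A hA) C :=
  fun _ => rfl

def pi {ι : Type} {Rs : ι → Type} [∀ i, CommRing (Rs i)] (C : ∀ i, MatrixComplex (Rs i) f) :
    MatrixComplex (∀ i, Rs i) f where
  d k := Matrix.of fun a b i => (C i).d k a b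
  comp_eq_zero k := by
    ext a b i
    simpa [Matrix.mul_apply, Finset.sum_apply] using
      congrFun (congrFun ((C i).comp_eq_zero k) a) b

theorem specializesCx_pi {ι : Type} {Rs : ι → Type} [∀ i, CommRing (Rs i)]
    (C : ∀ i, MatrixComplex (Rs i) f) (i : ι) : SpecializesCx (Pi.evalRingHom Rs i) (pi C) (C i) :=
  fun _ => rfl

def IsLengthTwoResolution (C : MatrixComplex R f) : Prop :=
  Function.Injective (C.d 1).mulVec ∧ ∀ v, C.d 0 *ᵥ v = 0 → ∃ w, C.d 1 *ᵥ w = v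

theorem isAcyclic_two_iff (hf : f 3 = 0) (C : MatrixComplex R f) :
    C.IsAcyclic 2 ↔ C.IsLengthTwoResolution := by
  have : Subsingleton (Fin (f 3) → R) := by rw [hf]; infer_instance
  have hrange₂ : LinearMap.range (C.d 2).mulVecLin = ⊥ :=
    LinearMap.range_eq_bot.2 (LinearMap.ext fun u => by rw [Subsingleton.elim u 0, map_zero]; rfl)
  have hrange₁ : LinearMap.range (C.d 1).mulVecLin ≤ LinearMap.ker (C.d 0).mulVecLin := by
    rintro _ ⟨w, rfl⟩
    simp [Matrix.mulVec_mulVec, C.comp_eq_zero 0]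
  have hker₁ : LinearMap.ker (C.d 1).mulVecLin = ⊥ ↔ Function.Injective (C.d 1).mulVec :=
    LinearMap.ker_eq_bot
  have hker₀ : LinearMap.ker (C.d 0).mulVecLin = LinearMap.range (C.d 1).mulVecLin ↔
      ∀ v, C.d 0 *ᵥ v = 0 → ∃ w, C.d 1 *ᵥ w = v := by
    rw [le_antisymm_iff, and_iff_left hrange₁]
    rfl
  constructor
  · intro h
    exact ⟨hker₁.1 ((h 1 one_lt_two).trans hrange₂), hker₀.1 (h 0 two_pos)⟩
  · rintro ⟨h₁, h₀⟩ k hk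
    interval_cases k
    · exact hker₀.2 h₀
    · exact (hker₁.2 h₁).trans hrange₂.symm

namespace IsLengthTwoResolution

theorem of_specializesCx {φ : R →+* S} (hφ : Function.Injective φ) {C : MatrixComplex R f}
    {C' : MatrixComplex S f} (h : SpecializesCx φ C C') (hC' : C'.IsLengthTwoResolution)
    (hlift : ∀ v w, C'.d 1 *ᵥ w = φ ∘ v → ∃ w', φ ∘ w' = w) : C.IsLengthTwoResolution := by
  have hφ' {n : ℕ} : Function.Injective (φ ∘ · : (Fin n → R) → (Fin n → S)) := hφ.comp_left
  refine ⟨fun w₁ w₂ hw => hφ' (hC'.1 ?_), fun v hv => ?_⟩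
  · simp only [h.mulVec_comp, hw]
  · obtain ⟨w, hw⟩ := hC'.2 (φ ∘ v) (by rw [h.mulVec_comp, hv]; ext; simp)
    obtain ⟨w', rfl⟩ := hlift v w hw
    exact ⟨w', hφ' (show φ ∘ (C.d 1 *ᵥ w') = φ ∘ v by rw [← h.mulVec_comp, hw])⟩

theorem restrict [Algebra K R] {C : MatrixComplex R f} (hC : C.IsLengthTwoResolution)
    {A : Subalgebra K R} (hA : ∀ k i j, C.d k i j ∈ A)
    (hsolve : ∀ w, (∀ i, (C.d 1 *ᵥ w) i ∈ A) → ∀ j, w j ∈ A) :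
    (C.restrict A hA).IsLengthTwoResolution := by
  refine of_specializesCx Subtype.val_injective (C.specializesCx_restrict A hA) hC fun v w hw => ?_
  have hmem : ∀ j, w j ∈ A := hsolve w fun i => by rw [hw]; exact (v i).2
  exact ⟨fun j => ⟨w j, hmem j⟩, rfl⟩

theorem map_ringEquiv {C : MatrixComplex R f} (hC : C.IsLengthTwoResolution) (e : R ≃+* S) :
    (C.map e.toRingHom).IsLengthTwoResolution :=
  of_specializesCx e.symm.injective (C.specializesCx_map_symm e) hC fun _ w _ =>
    ⟨e ∘ w, by ext; simp⟩

theorem pi {ι : Type} {Rs : ι → Type} [∀ i, CommRing (Rs i)] {C : ∀ i, MatrixComplex (Rs i) f}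
    (hC : ∀ i, (C i).IsLengthTwoResolution) : (MatrixComplex.pi C).IsLengthTwoResolution := by
  have heval (k : ℕ) (u : Fin (f (k + 1)) → ∀ i, Rs i) (i : ι) :
      (C i).d k *ᵥ (fun j => u j i) = fun a => ((MatrixComplex.pi C).d k *ᵥ u) a i :=
    (specializesCx_pi C i).mulVec_comp k u
  refine ⟨fun w₁ w₂ hw => ?_, fun v hv => ?_⟩
  · ext j i
    have : (C i).d 1 *ᵥ (fun j => w₁ j i) = (C i).d 1 *ᵥ (fun j => w₂ j i) := by
      simp only [heval, hw]
    exact congrFun ((hC i).1 this) j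
  · have hvi (i : ι) : ∃ w, (C i).d 1 *ᵥ w = fun a => v a i :=
      (hC i).2 _ (by rw [heval, hv]; rfl)
    choose w hw using hvi
    refine ⟨fun j i => w i j, ?_⟩
    ext a i
    exact (congrFun (heval 1 _ i) a).symm.trans (congrFun (hw i) a)

end IsLengthTwoResolution

end MatrixComplex

section Equalizer

variable [Algebra K R] [Algebra K S] {φ ψ : R →ₐ[K] S} {C : MatrixComplex R f}
  {G : MatrixComplex S f}

theorem SpecializesCx.entries_mem_equalizer (hφ : SpecializesCx (φ : R →+* S) C G)
    (hψ : SpecializesCx (ψ : R →+* S) C G) (k : ℕ) (i : Fin (f k)) (j : Fin (f (k + 1))) :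
    C.d k i j ∈ AlgHom.equalizer φ ψ :=
  (congrFun (congrFun (hφ k) i) j).trans (congrFun (congrFun (hψ k) i) j).symm

theorem SpecializesCx.mem_equalizer_of_mulVec (hφ : SpecializesCx (φ : R →+* S) C G)
    (hψ : SpecializesCx (ψ : R →+* S) C G) (hG : Function.Injective (G.d 1).mulVec)
    {w : Fin (f 2) → R} (hw : ∀ i, (C.d 1 *ᵥ w) i ∈ AlgHom.equalizer φ ψ) (j : Fin (f 2)) :
    w j ∈ AlgHom.equalizer φ ψ :=
  congrFun (hφ.comp_eq_comp_of_mulVec hψ hG (funext hw)) j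

theorem MatrixComplex.IsLengthTwoResolution.restrict_equalizer
    (hC : C.IsLengthTwoResolution) (hG : Function.Injective (G.d 1).mulVec)
    (hφ : SpecializesCx (φ : R →+* S) C G) (hψ : SpecializesCx (ψ : R →+* S) C G) :
    (C.restrict (AlgHom.equalizer φ ψ) (hφ.entries_mem_equalizer hψ)).IsLengthTwoResolution :=
  hC.restrict _ fun _ hw => hφ.mem_equalizer_of_mulVec hψ hG hw

end Equalizer

theorem exists_surjective_aeval_of_cardinalMk_le [Algebra K S] (hS : #S ≤ #K ⊔ ℵ₀) :
    ∃ θ : MvPolynomial (K ⊕ ℕ) K →ₐ[K] S, Function.Surjective θ := by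
  have hle : #S ≤ #(K ⊕ ℕ) := by
    rw [mk_sum, lift_id, lift_id, mk_nat]
    exact hS.trans (sup_le (self_le_add_right _ _) (self_le_add_left _ _))
  obtain ⟨ι⟩ := hle
  refine ⟨MvPolynomial.aeval (Function.invFun ι), fun x => ?_⟩
  obtain ⟨c, hc⟩ := Function.invFun_surjective ι.injective x
  exact ⟨MvPolynomial.X c, by rw [MvPolynomial.aeval_X, hc]⟩

namespace MatrixComplex

section Universal

variable [Algebra K R]

variable (K) in
def IsUniversal (C : MatrixComplex R f) : Prop :=
  ∀ (S : Type) [CommRing S] [Algebra K S] (G : MatrixComplex S f), G.IsLengthTwoResolution →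
    ∃! φ : R →ₐ[K] S, SpecializesCx (φ : R →+* S) C G

variable (K) in
def IsWeaklyUniversal (C : MatrixComplex R f) : Prop :=
  ∀ (S : Type) [CommRing S] [Algebra K S] (G : MatrixComplex S f), G.IsLengthTwoResolution →
    ∃ φ : R →ₐ[K] S, SpecializesCx (φ : R →+* S) C G

variable (K) in
def fixedSubalgebra (C : MatrixComplex R f) : Subalgebra K R :=
  ⨅ ψ : {ψ : R →ₐ[K] R // SpecializesCx (ψ : R →+* R) C C}, AlgHom.equalizer ψ.1 (AlgHom.id K R)

variable {C : MatrixComplex R f}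

theorem mem_fixedSubalgebra {x : R} :
    x ∈ C.fixedSubalgebra K ↔ ∀ ψ : R →ₐ[K] R, SpecializesCx (ψ : R →+* R) C C → ψ x = x := by
  simp only [fixedSubalgebra, Algebra.mem_iInf, AlgHom.mem_equalizer, Subtype.forall]
  rfl

theorem entries_mem_fixedSubalgebra (k : ℕ) (i : Fin (f k)) (j : Fin (f (k + 1))) :
    C.d k i j ∈ C.fixedSubalgebra K :=
  mem_fixedSubalgebra.2 fun _ hψ =>
    hψ.entries_mem_equalizer (ψ := AlgHom.id K R) (specializesCx_id C) k i j

variable (K C) in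
def restrictFixed : MatrixComplex (C.fixedSubalgebra K) f :=
  C.restrict (C.fixedSubalgebra K) entries_mem_fixedSubalgebra

theorem IsLengthTwoResolution.restrictFixed (hC : C.IsLengthTwoResolution) :
    (C.restrictFixed K).IsLengthTwoResolution :=
  hC.restrict _ fun _ hw j => mem_fixedSubalgebra.2 fun ψ hψ =>
    hψ.mem_equalizer_of_mulVec (φ := ψ) (ψ := AlgHom.id K R) (specializesCx_id C) hC.1
      (fun i => mem_fixedSubalgebra.1 (hw i) ψ hψ) j

theorem IsWeaklyUniversal.isUniversal_restrictFixed (hC : C.IsLengthTwoResolution)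
    (hweak : C.IsWeaklyUniversal K) : (C.restrictFixed K).IsUniversal K := by
  intro S _ _ G hG
  set U := C.fixedSubalgebra K
  have hU : SpecializesCx (U.val : U →+* R) (C.restrictFixed K) C :=
    C.specializesCx_restrict U _
  obtain ⟨χ, hχ⟩ := hweak S G hG
  refine ⟨χ.comp U.val, hU.comp hχ, fun φ hφ => ?_⟩
  set E := AlgHom.equalizer φ (χ.comp U.val)
  obtain ⟨ρ, hρ⟩ := hweak E _ (hC.restrictFixed.restrict_equalizer hG.1 hφ (hU.comp hχ))
  -- `C` specializes to itself along `R → E → U → R`, so this composite fixes `U` pointwise.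
  have hloop : SpecializesCx ((U.val.comp (E.val.comp ρ) : R →ₐ[K] R) : R →+* R) C C :=
    hρ.comp (((C.restrictFixed K).specializesCx_restrict E _).comp hU)
  ext x
  have hx : E.val (ρ x) = x := Subtype.ext (mem_fixedSubalgebra.1 x.2 _ hloop)
  rw [← hx]
  exact (ρ x).2

end Universal

section SolutionClosure

variable [Algebra K S] (G : MatrixComplex S f)

def entrySet : Set S :=
  ⋃ k, Set.range fun p : Fin (f k) × Fin (f (k + 1)) => G.d k p.1 p.2

def solutionSet (A : Subalgebra K S) : Set S :=
  {x | ∃ (w : Fin (f 2) → S) (j : Fin (f 2)), (∀ i, (G.d 1 *ᵥ w) i ∈ A) ∧ w j = x}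

variable (K) in
def solutionClosureChain : ℕ → Subalgebra K S
  | 0 => Algebra.adjoin K G.entrySet
  | n + 1 => Algebra.adjoin K (solutionClosureChain n ∪ G.solutionSet (solutionClosureChain n))

variable (K) in
def solutionClosure : Subalgebra K S :=
  ⨆ n, G.solutionClosureChain K n

theorem monotone_solutionClosureChain : Monotone (G.solutionClosureChain K) :=
  monotone_nat_of_le_succ fun _ _ hx => Algebra.subset_adjoin (Or.inl hx)

theorem coe_solutionClosure :
    (G.solutionClosure K : Set S) = ⋃ n, (G.solutionClosureChain K n : Set S) :=
  Subalgebra.coe_iSup_of_directed G.monotone_solutionClosureChain.directed_le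

theorem mem_solutionClosure_iff {x : S} :
    x ∈ G.solutionClosure K ↔ ∃ n, x ∈ G.solutionClosureChain K n := by
  rw [← SetLike.mem_coe, coe_solutionClosure, Set.mem_iUnion]
  rfl

theorem entries_mem_solutionClosure (k : ℕ) (i : Fin (f k)) (j : Fin (f (k + 1))) :
    G.d k i j ∈ G.solutionClosure K :=
  (G.mem_solutionClosure_iff).2
    ⟨0, Algebra.subset_adjoin (Set.mem_iUnion.2 ⟨k, (i, j), rfl⟩)⟩

theorem mem_solutionClosure_of_mulVec {w : Fin (f 2) → S}
    (hw : ∀ i, (G.d 1 *ᵥ w) i ∈ G.solutionClosure K) (j : Fin (f 2)) :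
    w j ∈ G.solutionClosure K := by
  choose n hn using fun i => (G.mem_solutionClosure_iff).1 (hw i)
  have hN : ∀ i, (G.d 1 *ᵥ w) i ∈ G.solutionClosureChain K (Finset.univ.sup n) :=
    fun i => G.monotone_solutionClosureChain (Finset.le_sup (Finset.mem_univ i)) (hn i)
  exact (G.mem_solutionClosure_iff).2
    ⟨_ + 1, Algebra.subset_adjoin (Or.inr ⟨w, j, hN, rfl⟩)⟩

theorem cardinalMk_solutionSet_le (hG : Function.Injective (G.d 1).mulVec)
    (A : Subalgebra K S) {κ : Cardinal} (hκ : ℵ₀ ≤ κ) (hA : #A ≤ κ) :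
    #(G.solutionSet A) ≤ κ := by
  set Sol := {w : Fin (f 2) → S // ∀ i, (G.d 1 *ᵥ w) i ∈ A}
  -- a solution is determined by its right-hand side, since `d 1` is injective
  have hSol : #Sol ≤ #(Fin (f 1) → A) :=
    mk_le_of_injective (f := fun w : Sol => fun i => (⟨(G.d 1 *ᵥ w.1) i, w.2 i⟩ : A))
      fun w₁ w₂ h => Subtype.ext (hG (funext fun i => congrArg Subtype.val (congrFun h i)))
  have hcover : G.solutionSet A ⊆ Set.range fun p : Sol × Fin (f 2) => p.1.1 p.2 := by
    rintro _ ⟨w, j, hw, rfl⟩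
    exact ⟨(⟨w, hw⟩, j), rfl⟩
  calc #(G.solutionSet A) ≤ #(Sol × Fin (f 2)) := (mk_le_mk_of_subset hcover).trans mk_range_le
    _ ≤ κ * κ := by
      rw [mk_prod, lift_id, lift_id]
      refine mul_le_mul' (hSol.trans ?_) (mk_le_aleph0.trans hκ)
      rw [mk_arrow, lift_id, mk_fin, lift_natCast, power_natCast]
      exact (pow_le_pow_left₀ zero_le hA _).trans (power_nat_le hκ)
    _ = κ := mul_eq_self hκ

theorem cardinalMk_adjoin_le_of_le {s : Set S} (hs : #s ≤ #K ⊔ ℵ₀) :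
    #(Algebra.adjoin K s) ≤ #K ⊔ ℵ₀ :=
  (Algebra.cardinalMk_adjoin_le K s).trans (by
    rw [sup_assoc, sup_comm #s, ← sup_assoc]
    exact sup_le le_rfl hs)

theorem cardinalMk_solutionClosureChain_le (hG : Function.Injective (G.d 1).mulVec) (n : ℕ) :
    #(G.solutionClosureChain K n) ≤ #K ⊔ ℵ₀ := by
  have hκ : ℵ₀ ≤ #K ⊔ ℵ₀ := le_sup_right
  induction n with
  | zero =>
    have hcount : (G.entrySet).Countable :=
      Set.countable_iUnion fun _ => (Set.finite_range _).countable
    exact cardinalMk_adjoin_le_of_le (hcount.le_aleph0.trans hκ)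
  | succ n ih =>
    refine cardinalMk_adjoin_le_of_le ((mk_union_le _ _).trans ?_)
    calc _ ≤ (#K ⊔ ℵ₀) + (#K ⊔ ℵ₀) :=
          add_le_add ih (G.cardinalMk_solutionSet_le hG _ hκ ih)
      _ = #K ⊔ ℵ₀ := add_eq_self hκ

variable (K) in
theorem cardinalMk_solutionClosure_le (hG : Function.Injective (G.d 1).mulVec) :
    #(G.solutionClosure K) ≤ #K ⊔ ℵ₀ := by
  have hκ : ℵ₀ ≤ #K ⊔ ℵ₀ := le_sup_right
  change #(G.solutionClosure K : Set S) ≤ _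
  rw [coe_solutionClosure]
  calc _ ≤ #ℕ * ⨆ n, #(G.solutionClosureChain K n : Set S) := mk_iUnion_le _
    _ ≤ (#K ⊔ ℵ₀) * (#K ⊔ ℵ₀) :=
      mul_le_mul' (mk_nat.trans_le hκ) (ciSup_le' (G.cardinalMk_solutionClosureChain_le hG))
    _ = #K ⊔ ℵ₀ := mul_eq_self hκ

end SolutionClosure

variable (K f)

-- Every length-two resolution specializes from one over a quotient of `MvPolynomial (K ⊕ ℕ) K`:
-- it descends to its solution closure, which has at most `#K ⊔ ℵ₀` elements.
def SolutionIndex : Type :=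
  Σ J : Ideal (MvPolynomial (K ⊕ ℕ) K),
    {C : MatrixComplex (MvPolynomial (K ⊕ ℕ) K ⧸ J) f // C.IsLengthTwoResolution}

abbrev WeaklyUniversalRing : Type :=
  ∀ i : SolutionIndex K f, MvPolynomial (K ⊕ ℕ) K ⧸ i.1

noncomputable def weaklyUniversalComplex : MatrixComplex (WeaklyUniversalRing K f) f :=
  pi fun i => i.2.1

theorem isLengthTwoResolution_weaklyUniversalComplex :
    (weaklyUniversalComplex K f).IsLengthTwoResolution :=
  IsLengthTwoResolution.pi fun i => i.2.2

theorem isWeaklyUniversal_weaklyUniversalComplex :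
    (weaklyUniversalComplex K f).IsWeaklyUniversal K := by
  intro S _ _ G hG
  set A := G.solutionClosure K
  obtain ⟨θ, hθ⟩ :=
    exists_surjective_aeval_of_cardinalMk_le (G.cardinalMk_solutionClosure_le K hG.1)
  let e : A ≃+* MvPolynomial (K ⊕ ℕ) K ⧸ RingHom.ker θ :=
    (Ideal.quotientKerAlgEquivOfSurjective hθ).symm.toRingEquiv
  let G₀ := G.restrict A G.entries_mem_solutionClosure
  have hG₀ : G₀.IsLengthTwoResolution :=
    hG.restrict _ fun _ => G.mem_solutionClosure_of_mulVec
  let Gq := G₀.map e.toRingHom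
  let i : SolutionIndex K f := ⟨RingHom.ker θ, Gq, hG₀.map_ringEquiv e⟩
  have h₁ : SpecializesCx (Pi.evalRingHom _ i) (weaklyUniversalComplex K f) Gq :=
    specializesCx_pi _ i
  have h₂ : SpecializesCx e.symm.toRingHom Gq G₀ := G₀.specializesCx_map_symm e
  have h₃ : SpecializesCx (A.val : A →+* S) G₀ G := G.specializesCx_restrict A _
  exact ⟨A.val.comp ((Ideal.quotientKerAlgEquivOfSurjective hθ).toAlgHom.comp
    (Pi.evalAlgHom K _ i)), (h₁.comp h₂).comp h₃⟩

end MatrixComplex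

open MatrixComplex in
theorem hochster_universal_pair_exists_general
    (r₁ r₂ f₀ : ℕ) :
    ∃ U : AlgebraComplexPair (hochsterFormat f₀ r₁ r₂),
      U.complex.IsAcyclic 2 ∧
      ∀ (S : Type) (_ : CommRing S) (_ : Algebra ℂ S)
        (G : MatrixComplex S (hochsterFormat f₀ r₁ r₂)),
        G.IsAcyclic 2 →
        ∃! φ : U.carrier →ₐ[ℂ] S, SpecializesCx (φ : U.carrier →+* S) U.complex G := by
  have hf : hochsterFormat f₀ r₁ r₂ 3 = 0 := rfl
  have hW := isLengthTwoResolution_weaklyUniversalComplex ℂ (hochsterFormat f₀ r₁ r₂)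
  have hU := (isWeaklyUniversal_weaklyUniversalComplex ℂ _).isUniversal_restrictFixed hW
  exact ⟨⟨_, (weaklyUniversalComplex ℂ _).restrictFixed ℂ⟩,
    (isAcyclic_two_iff hf _).2 hW.restrictFixed,
    fun S _ _ G hG => hU S G ((isAcyclic_two_iff hf G).1 hG)⟩

theorem hochster_universal_pair_exists
    (r₁ r₂ f₀ : ℕ) (h₁ : 1 ≤ r₁) (h₂ : 1 ≤ r₂) (h₀ : r₁ ≤ f₀) :
    ∃ U : AlgebraComplexPair (hochsterFormat f₀ r₁ r₂),
      U.complex.IsAcyclic 2 ∧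
      ∀ (S : Type) (_ : CommRing S) (_ : Algebra ℂ S)
        (G : MatrixComplex S (hochsterFormat f₀ r₁ r₂)),
        G.IsAcyclic 2 →
        ∃! φ : U.carrier →ₐ[ℂ] S, SpecializesCx (φ : U.carrier →+* S) U.complex G :=
  hochster_universal_pair_exists_general r₁ r₂ f₀
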